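/- Fix real λ and real η. Define real sequences (p_k)_{k≥0} and (q_k)_{k≥0} by p₀ = 1, q₀ = 0 and, for k ≥ 0, (k+1)·p_{k+1} = u_k·p_k + v_k·q_k and (k+1)·q_{k+1} = −v_k·p_k + u_k·q_k, where u_k = η(2k+1) and v_k = k + k² − λ² − λ − η². Then for every k ≥ 0, p_k + i·q_k = (−i)^k · (iη − λ)_k · (iη + λ + 1)_k / k!, where (a)_k = a(a+1)···(a+k−1) denotes the Pochhammer symbol (rising factorial) in ℂ. -/

import Mathlib

open Complex

/-- the coefficient sequences (p_k), (q_k) of the asymptotic expansions of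
the auxiliary Coulomb functions satisfy
p_k + i q_k = (−i)^k (iη−λ)_k (iη+λ+1)_k / k!. -/
theorem coulomb_pq_closed_form (lam η : ℝ) (p q : ℕ → ℝ)
    (hp0 : p 0 = 1) (hq0 : q 0 = 0)
    (hp : ∀ k : ℕ, ((k : ℝ) + 1) * p (k + 1) =
      η * (2 * (k : ℝ) + 1) * p k +
        ((k : ℝ) + (k : ℝ) ^ 2 - lam ^ 2 - lam - η ^ 2) * q k)
    (hq : ∀ k : ℕ, ((k : ℝ) + 1) * q (k + 1) =
      -((k : ℝ) + (k : ℝ) ^ 2 - lam ^ 2 - lam - η ^ 2) * p k +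
        η * (2 * (k : ℝ) + 1) * q k) :
    ∀ k : ℕ, (p k : ℂ) + Complex.I * (q k : ℂ) =
      (-Complex.I) ^ k *
        (ascPochhammer ℂ k).eval (Complex.I * (η : ℂ) - (lam : ℂ)) *
        (ascPochhammer ℂ k).eval (Complex.I * (η : ℂ) + (lam : ℂ) + 1) / ((Nat.factorial k : ℕ) : ℂ) := by
  intro k
  induction k with
  | zero => simp [hp0, hq0]
  | succ k ih =>
    have hk : ((k : ℂ) + 1) ≠ 0 := Nat.cast_add_one_ne_zero k
    have hfac : ((Nat.factorial k : ℕ) : ℂ) ≠ 0 := by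
      exact_mod_cast Nat.cast_ne_zero.mpr (Nat.factorial_ne_zero k)
    have hpC : ((k : ℂ) + 1) * (p (k + 1) : ℂ) =
        (η : ℂ) * (2 * (k : ℂ) + 1) * (p k : ℂ) +
          ((k : ℂ) + (k : ℂ) ^ 2 - (lam : ℂ) ^ 2 - (lam : ℂ) - (η : ℂ) ^ 2) * (q k : ℂ) := by
      exact_mod_cast congrArg (fun x : ℝ => (x : ℂ)) (hp k)
    have hqC : ((k : ℂ) + 1) * (q (k + 1) : ℂ) =
        -((k : ℂ) + (k : ℂ) ^ 2 - (lam : ℂ) ^ 2 - (lam : ℂ) - (η : ℂ) ^ 2) * (p k : ℂ) +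
          (η : ℂ) * (2 * (k : ℂ) + 1) * (q k : ℂ) := by
      exact_mod_cast congrArg (fun x : ℝ => (x : ℂ)) (hq k)
    have key : ((k : ℂ) + 1) * ((p (k + 1) : ℂ) + Complex.I * (q (k + 1) : ℂ)) =
        (-Complex.I) * (Complex.I * (η : ℂ) - (lam : ℂ) + k) *
          (Complex.I * (η : ℂ) + (lam : ℂ) + 1 + k) * ((p k : ℂ) + Complex.I * (q k : ℂ)) := by
      linear_combination hpC + Complex.I * hqC +
        ((η:ℂ) * (2*(k:ℂ)+1) * (p k : ℂ) + ((k:ℂ)+(k:ℂ)^2-(lam:ℂ)^2-(lam:ℂ)) * (q k : ℂ) +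
          Complex.I * (η:ℂ) * (2*(k:ℂ)+1) * (q k : ℂ) +
          (η:ℂ)^2 * (q k : ℂ) * (Complex.I^2 - 1) +
          Complex.I * (η:ℂ)^2 * (p k : ℂ)) * Complex.I_sq
    have h1 : (p (k + 1) : ℂ) + Complex.I * (q (k + 1) : ℂ) =
        (-Complex.I) * (Complex.I * (η : ℂ) - (lam : ℂ) + k) *
          (Complex.I * (η : ℂ) + (lam : ℂ) + 1 + k) * ((p k : ℂ) + Complex.I * (q k : ℂ)) /
          ((k : ℂ) + 1) := by
      field_simp
      linear_combination key
    rw [h1, ih, ascPochhammer_succ_eval, ascPochhammer_succ_eval, Nat.factorial_succ,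
      pow_succ]
    push_cast
    field_simp
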